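/- arXiv:1209.2373 — 3 statements merged into one kernel-verified Lean document; each statement's English description precedes it below -/
import Mathlib

section
/- A natural number p > 1 is prime if and only if for every natural number n with n > p + 1, p divides the difference binomial(n, p) − ⌊n/p⌋. -/
/-!
For a prime `p`, Lucas' theorem gives `C(n, p) ≡ C(n % p, 0) * C(n / p, 1) = n / p (mod p)`.
If `p > 1` is composite, let `q < p` be its least prime factor and take `n = p + q`, so that
`n / p = 1`. Every `0 < k < q` is coprime to `p`, hence `p ∣ C(p, k)`, and Vandermonde's identity
gives `C(p + q, q) ≡ 1 + C(p, q) (mod p)`. But `p ∤ C(p, q)`: from `q * C(p, q) = p * C(p - 1, q - 1)`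
it would follow that `q ∣ C(p - 1, q - 1)`, whereas Lucas' theorem gives
`C(p - 1, q - 1) ≡ C(q - 1, q - 1) = 1 (mod q)`.
-/

namespace Nat

theorem choose_prime_modEq_div {p : ℕ} (hp : p.Prime) (n : ℕ) : n.choose p ≡ n / p [MOD p] := by
  have := Fact.mk hp
  simpa [Nat.div_self hp.pos] using
    Choose.choose_modEq_choose_mod_mul_choose_div_nat (n := n) (k := p) (p := p)

theorem Coprime.dvd_choose {n k : ℕ} (h : n.Coprime k) : n ∣ n.choose k := by
  rcases k with _ | k
  · simp [(coprime_zero_right n).1 h]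
  rcases n with _ | n
  · simp
  exact h.dvd_of_dvd_mul_right (Dvd.intro _ (add_one_mul_choose_eq n k))

theorem choose_pred_prime_modEq_one {q m : ℕ} (hq : q.Prime) (h : q ∣ m + 1) :
    m.choose (q - 1) ≡ 1 [MOD q] := by
  have := Fact.mk hq
  have := hq.pos
  have hm : m % q = q - 1 := by
    have hmod : (m % q + 1) % q = 0 := by rw [Nat.mod_add_mod, Nat.mod_eq_zero_of_dvd h]
    have := Nat.mod_lt m hq.pos
    by_contra hne
    rw [Nat.mod_eq_of_lt (by omega)] at hmod
    omega
  have hq1 : (q - 1) / q = 0 := Nat.div_eq_of_lt (by omega)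
  simpa [hm, hq1, Nat.mod_eq_of_lt (show q - 1 < q by omega)] using
    Choose.choose_modEq_choose_mod_mul_choose_div_nat (n := m) (k := q - 1) (p := q)

theorem not_dvd_choose_of_prime_dvd {n q : ℕ} (hq : q.Prime) (hqn : q ∣ n) (hn : n ≠ 0) :
    ¬ n ∣ n.choose q := by
  obtain ⟨m, rfl⟩ : ∃ m, n = m + 1 := ⟨n - 1, by omega⟩
  obtain ⟨r, rfl⟩ : ∃ r, q = r + 1 := ⟨q - 1, by have := hq.pos; omega⟩
  rintro ⟨c, hc⟩
  have hpascal : (m + 1) * m.choose r = (m + 1) * (c * (r + 1)) := by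
    rw [add_one_mul_choose_eq, hc, mul_assoc]
  have hdvd : r + 1 ∣ m.choose r := ⟨c, by rw [Nat.eq_of_mul_eq_mul_left (by omega) hpascal, mul_comm]⟩
  have hone : m.choose r ≡ 1 [MOD r + 1] := by simpa using choose_pred_prime_modEq_one hq hqn
  exact hq.one_lt.ne' (Nat.dvd_one.1 ((hone.dvd_iff dvd_rfl).1 hdvd))

theorem add_choose_modEq_one_add {p q : ℕ} (hq : 0 < q) (hqp : q ≤ p.minFac) :
    (p + q).choose q ≡ 1 + p.choose q [MOD p] := by
  rw [← ZMod.natCast_eq_natCast_iff, add_choose_eq, Nat.cast_sum,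
    Finset.sum_eq_add_of_mem (0, q) (q, 0) (by simp) (by simp) (by simp; omega)]
  · simp only [choose_zero_right, choose_self, mul_one]
    push_cast
    ring
  rintro ⟨i, j⟩ hij hne
  have hij : i + j = q := by simpa using hij
  obtain ⟨hi0, hiq⟩ : i ≠ 0 ∧ i < q := by grind
  have hi : p ∣ p.choose i := (coprime_of_lt_minFac hi0 (hiq.trans_le hqp)).dvd_choose
  simp [(ZMod.natCast_eq_zero_iff _ _).2 hi]

end Nat

theorem prime_iff_dvd_choose_sub_floor (p : ℕ) (hp : 1 < p) :
    p.Prime ↔ ∀ n : ℕ, n > p + 1 →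
      (p : ℤ) ∣ ((n.choose p : ℤ) - ((n / p : ℕ) : ℤ)) := by
  simp_rw [← Nat.modEq_iff_dvd]
  refine ⟨fun hpp n _ => (Nat.choose_prime_modEq_div hpp n).symm, fun H => ?_⟩
  by_contra hnp
  set q := p.minFac
  have hq : q.Prime := Nat.minFac_prime (by omega)
  have hqp : q < p := (Nat.not_prime_iff_minFac_lt (by omega)).1 hnp
  have hdiv : (p + q) / p = 1 := by
    rw [Nat.add_div_left _ (by omega), Nat.div_eq_of_lt hqp]
  have h := H (p + q) (by have := hq.two_le; omega)
  rw [hdiv, Nat.choose_symm_add] at h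
  have hzero : p.choose q ≡ 0 [MOD p] :=
    Nat.ModEq.add_left_cancel' 1 ((Nat.add_choose_modEq_one_add hq.pos le_rfl).symm.trans h.symm)
  exact Nat.not_dvd_choose_of_prime_dvd hq (Nat.minFac_dvd p) (by omega) (Nat.modEq_zero_iff_dvd.1 hzero)
end

section
/- Let p > 1 be a composite natural number and let q be a prime divisor of p. Then p does not divide the integer binomial(p + q, p) − ⌊(p + q)/p⌋; in particular, taking n = p + q (which satisfies n > p + 1) shows that there exists n > p + 1 with binomial(n, p) ≢ ⌊n/p⌋ (mod p). -/
open Nat Finset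

lemma prod_add_expand (p : ℤ) (f : ℕ → ℤ) (F : Finset ℕ) :
    p ^ 2 ∣ (∏ i ∈ F, (p + f i)) -
      ((∏ i ∈ F, f i) + p * ∑ j ∈ F, ∏ i ∈ F.erase j, f i) := by
  classical
  induction F using Finset.induction with
  | empty => simp
  | @insert a F ha ih =>
    obtain ⟨t, ht⟩ := ih
    refine ⟨(p + f a) * t + ∑ j ∈ F, ∏ i ∈ F.erase j, f i, ?_⟩
    have hsum : ∑ j ∈ insert a F, ∏ i ∈ (insert a F).erase j, f i
        = (∏ i ∈ F, f i) + f a * ∑ j ∈ F, ∏ i ∈ F.erase j, f i := by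
      rw [Finset.sum_insert ha, Finset.erase_insert ha, Finset.mul_sum]
      congr 1
      refine Finset.sum_congr rfl fun j hj => ?_
      rw [Finset.erase_insert_of_ne (by rintro rfl; exact ha hj),
        Finset.prod_insert (fun h => ha (Finset.erase_subset _ _ h))]
    rw [Finset.prod_insert ha, Finset.prod_insert ha, hsum]
    have h1 : ∏ i ∈ F, (p + f i)
        = (∏ i ∈ F, f i) + p * ∑ j ∈ F, ∏ i ∈ F.erase j, f i + p ^ 2 * t := by
      linarith [ht]
    rw [h1]; ring

lemma prod_range_add_succ (p : ℕ) : ∀ k : ℕ,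
    (∏ i ∈ range k, (p + (i + 1))) = (p + 1).ascFactorial k
  | 0 => by simp
  | k + 1 => by
    rw [Finset.prod_range_succ, prod_range_add_succ p k, Nat.ascFactorial_succ]
    ring

theorem composite_not_dvd_choose_sub_floor (p : ℕ) (hp : 1 < p) (hnp : ¬ p.Prime)
    (q : ℕ) (hq : q.Prime) (hqp : q ∣ p) :
    ¬ ((p : ℤ) ∣ (((p + q).choose p : ℤ) - (((p + q) / p : ℕ) : ℤ))) ∧
      ∃ n : ℕ, n > p + 1 ∧
        ¬ ((n.choose p : ℤ) ≡ ((n / p : ℕ) : ℤ) [ZMOD (p : ℤ)]) := by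
  have hq2 : 2 ≤ q := hq.two_le
  have hqlt : q < p := lt_of_le_of_ne (Nat.le_of_dvd (by omega) hqp)
    (by rintro rfl; exact hnp hq)
  have hfloor : (p + q) / p = 1 := by
    exact Nat.div_eq_of_lt_le (by omega) (by omega)
  have hmain : ¬ ((p : ℤ) ∣ (((p + q).choose p : ℤ) - (((p + q) / p : ℕ) : ℤ))) := by
    rw [hfloor]
    intro hdvd
    obtain ⟨m, rfl⟩ : ∃ m, q = m + 1 := ⟨q - 1, by omega⟩
    set q : ℕ := m + 1 with hqdef
    obtain ⟨u, hu⟩ := hdvd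
    set C : ℕ := (p + q).choose p with hC
    -- key identity: q! * choose (p+q) q = ∏ i in range q, (p + (i+1))
    have hid : (∏ i ∈ range q, (p + (i + 1))) = q ! * C := by
      rw [prod_range_add_succ, Nat.ascFactorial_eq_factorial_mul_choose, hC,
        Nat.choose_symm_add]
    have hcast : ((∏ i ∈ range q, (p + (i + 1)) : ℕ) : ℤ)
        = ∏ i ∈ range q, ((p : ℤ) + ((i : ℤ) + 1)) := by push_cast; rfl
    have hfact : (∏ i ∈ range q, ((i : ℤ) + 1)) = (q ! : ℤ) := by
      rw [← Finset.prod_range_add_one_eq_factorial q]; push_cast; rfl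
    obtain ⟨t, ht⟩ := prod_add_expand (p : ℤ) (fun i => ((i : ℤ) + 1)) (range q)
    set S : ℤ := ∑ j ∈ range q, ∏ i ∈ (range q).erase j, ((i : ℤ) + 1) with hS
    simp only [hfact] at ht
    -- from the two identities: q! * u = S + p * t
    have hkey : (q ! : ℤ) * u = S + (p : ℤ) * t := by
      have h1 : (q ! : ℤ) * C = ∏ i ∈ range q, ((p : ℤ) + ((i : ℤ) + 1)) := by
        rw [← hcast, hid]; push_cast; ring
      have hp0 : (p : ℤ) ≠ 0 := by positivity
      apply mul_left_cancel₀ hp0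
      have hu' : (C : ℤ) - 1 = (p : ℤ) * u := by push_cast at hu; linarith [hu]
      have : (C : ℤ) = 1 + (p : ℤ) * u := by linarith [hu']
      nlinarith [ht, h1, this]
    have hqdvdS : (q : ℤ) ∣ S := by
      have h1 : (q : ℤ) ∣ (q ! : ℤ) * u :=
        Dvd.dvd.mul_right (Int.natCast_dvd_natCast.mpr (Nat.dvd_factorial (by omega) le_rfl)) u
      have h2 : (q : ℤ) ∣ (p : ℤ) * t :=
        Dvd.dvd.mul_right (Int.natCast_dvd_natCast.mpr hqp) t
      have : S = (q ! : ℤ) * u - (p : ℤ) * t := by linarith [hkey]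
      rw [this]; exact dvd_sub h1 h2
    -- analyze S mod q : S ≡ m! , and q ∤ m!
    have herase : (range q).erase m = range m := by
      rw [hqdef, Finset.range_add_one, Finset.erase_insert Finset.notMem_range_self]
    have hSsplit : S = (m ! : ℤ)
        + ∑ j ∈ range m, ∏ i ∈ (range q).erase j, ((i : ℤ) + 1) := by
      have h0 : range q = insert m (range m) := by rw [hqdef, Finset.range_add_one]
      rw [hS, h0, Finset.sum_insert Finset.notMem_range_self,
        Finset.erase_insert Finset.notMem_range_self]
      congr 1
      rw [← Finset.prod_range_add_one_eq_factorial m]; push_cast; rfl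
    have hrest : (q : ℤ) ∣ ∑ j ∈ range m, ∏ i ∈ (range q).erase j, ((i : ℤ) + 1) := by
      refine Finset.dvd_sum fun j hj => ?_
      have hmem : m ∈ (range q).erase j := by
        refine Finset.mem_erase.mpr ⟨?_, ?_⟩
        · exact fun h => absurd h.symm (Nat.ne_of_lt (Finset.mem_range.mp hj))
        · exact Finset.mem_range.mpr (by omega)
      have := Finset.dvd_prod_of_mem (f := fun i : ℕ => ((i : ℤ) + 1)) hmem
      simpa [hqdef] using this
    have hqm : (q : ℤ) ∣ (m ! : ℤ) := by
      have : (m ! : ℤ) = S - ∑ j ∈ range m, ∏ i ∈ (range q).erase j, ((i : ℤ) + 1) := by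
        linarith [hSsplit]
      rw [this]; exact dvd_sub hqdvdS hrest
    have : q ∣ m ! := Int.natCast_dvd_natCast.mp hqm
    have := (Nat.Prime.dvd_factorial hq).mp this
    omega
  refine ⟨hmain, p + q, by omega, fun h => ?_⟩
  have hd := Int.ModEq.dvd h
  exact hmain (by rw [hfloor] at hd ⊢; simpa using (dvd_neg.mpr hd))
end

section
/- Let q be a prime number, let x ≥ 1 and k ≥ 1 be natural numbers with gcd(q, k) = 1, and set p = q^x · k. Then binomial(p + q, q) ≡ q^{x−1}·k + 1 (mod q^x). -/
/-!
Write `p = q * m` with `m = q ^ (x - 1) * k`. Cancelling `q` in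
`q! * C(p + q, q) = (p + 1) (p + 2) ⋯ (p + q)` gives
`(q - 1)! * C(p + q, q) = (m + 1) * (p + 1) ⋯ (p + q - 1)`.
Modulo `q ^ x`, which divides `p`, the last product is `(q - 1)!`, a unit since `q` is prime;
cancelling it leaves `C(p + q, q) ≡ m + 1`.
-/

namespace Nat

theorem ModEq.ascFactorial {N a b : ℕ} (h : a ≡ b [MOD N]) (j : ℕ) :
    a.ascFactorial j ≡ b.ascFactorial j [MOD N] := by
  induction j with
  | zero => rfl
  | succ j ih => simpa only [ascFactorial_succ] using (h.add_right j).mul ih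

theorem succ_ascFactorial_modEq_factorial {N n : ℕ} (h : N ∣ n) (j : ℕ) :
    (n + 1).ascFactorial j ≡ j ! [MOD N] := by
  have hn : n + 1 ≡ 1 [MOD N] := by
    simpa only [zero_add] using ((modEq_zero_iff_dvd.mpr h).add_right 1)
  simpa only [one_ascFactorial] using hn.ascFactorial j

theorem factorial_pred_mul_choose_mul_add_self {q : ℕ} (hq : 0 < q) (m : ℕ) :
    (q - 1)! * (q * m + q).choose q = (m + 1) * (q * m + 1).ascFactorial (q - 1) := by
  obtain ⟨r, rfl⟩ : ∃ r, q = r + 1 := ⟨q - 1, by omega⟩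
  have h := ascFactorial_eq_factorial_mul_choose ((r + 1) * m) (r + 1)
  rw [ascFactorial_succ, factorial_succ,
    show (r + 1) * m + 1 + r = (r + 1) * (m + 1) by ring] at h
  rw [add_tsub_cancel_right]
  apply Nat.eq_of_mul_eq_mul_left hq
  linarith

theorem choose_mul_add_self_modEq {N q m : ℕ} (hq : 0 < q) (hN : N ∣ q * m)
    (hcop : N.Coprime (q - 1)!) :
    (q * m + q).choose q ≡ m + 1 [MOD N] := by
  refine ModEq.cancel_left_of_coprime hcop ?_
  calc (q - 1)! * (q * m + q).choose q
      = (m + 1) * (q * m + 1).ascFactorial (q - 1) :=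
        factorial_pred_mul_choose_mul_add_self hq m
    _ ≡ (m + 1) * (q - 1)! [MOD N] := (succ_ascFactorial_modEq_factorial hN _).mul_left _
    _ = (q - 1)! * (m + 1) := mul_comm _ _

end Nat

theorem choose_congr_pow_mul_add_one_general (q : ℕ) (hq : q.Prime) (x k : ℕ)
    (hx : 1 ≤ x) (p : ℕ) (hp : p = q ^ x * k) :
    ((p + q).choose q : ℤ) ≡ ((q : ℤ) ^ (x - 1) * (k : ℤ) + 1) [ZMOD ((q : ℤ) ^ x)] := by
  have hp' : p = q * (q ^ (x - 1) * k) := by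
    rw [hp, ← mul_assoc, ← pow_succ', Nat.sub_add_cancel hx]
  have hcop : (q ^ x).Coprime (q - 1).factorial :=
    (hq.coprime_factorial_of_lt (Nat.sub_lt hq.pos one_pos)).pow_left x
  have hdvd : q ^ x ∣ q * (q ^ (x - 1) * k) := by
    rw [← hp', hp]
    exact dvd_mul_right _ _
  have h := Nat.choose_mul_add_self_modEq hq.pos hdvd hcop
  rw [← hp'] at h
  exact_mod_cast Int.natCast_modEq_iff.mpr h

theorem choose_congr_pow_mul_add_one (q : ℕ) (hq : q.Prime) (x k : ℕ)
    (hx : 1 ≤ x) (hk : 1 ≤ k) (hgcd : Nat.gcd q k = 1) (p : ℕ) (hp : p = q ^ x * k) :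
    ((p + q).choose q : ℤ) ≡ ((q : ℤ) ^ (x - 1) * (k : ℤ) + 1) [ZMOD ((q : ℤ) ^ x)] :=
  choose_congr_pow_mul_add_one_general q hq x k hx p hp
end
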